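/- Fix 0 < ε < 1, s, G > 0 and θ₀ ∈ (ε, 1/ε). Let (X̃_j, T̃_j), j = 1, 2, …, be i.i.d. pairs with X̃_j ~ Exp(θ₀) and T̃_j ~ Uniform[0,G] independent, and define Ψ_n(θ) = (1/n)·Σ_{j=1}^{n} 1_{T̃_j ≤ X̃_j ≤ T̃_j + s}·( X̃_j − 1/θ + α'(θ)/α(θ) ) for θ ∈ [ε, 1/ε], where α(θ) = (1 − exp(−θs))·(1 − exp(−Gθ))/(Gθ) and α' is its derivative. If θ̂_n are measurable random variables with values in [ε, 1/ε] such that Ψ_n(θ̂_n) converges in probability to 0, then θ̂_n converges in probability to θ₀. -/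

import Mathlib

/-!
Since `α'/α = 1/θ - h(θ)` with `h` the conditional mean of `X̃` given selection, the score is
`ψ_θ(x, t) = 1_{t ≤ x ≤ t + s} (x - h(θ))`. Its mean under `θ₀` is `α(θ₀) (h(θ₀) - h(θ))`, and
`h` is strictly decreasing (each summand is the mean of a truncated exponential, which decreases
in the rate), so the limiting score is negative left of `θ₀` and positive right of it. As `Ψ_n`
is nondecreasing in `θ`, the strong law at the two points `θ₀ ± d` forces any approximate zero
`θ̂_n` into `(θ₀ - d, θ₀ + d)` with probability tending to one.
-/

open MeasureTheory ProbabilityTheory Real Set Filter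

/-- The uniform probability measure on the interval `[0, G]`. -/
noncomputable def uniformMeasure (G : ℝ) : Measure ℝ :=
  (ENNReal.ofReal G)⁻¹ • (volume.restrict (Set.Icc 0 G))

/-- The selection probability function `α(θ) = (1 − e^{−θs})(1 − e^{−Gθ})/(Gθ)`. -/
noncomputable def alphaFun (s G θ : ℝ) : ℝ :=
  (1 - exp (-(θ * s))) * (1 - exp (-(G * θ))) / (G * θ)

/-- The per-observation score `ψ_θ(x,t) = 1_{t ≤ x ≤ t+s}·(x − 1/θ + α'(θ)/α(θ))`. -/
noncomputable def psiFun (s G θ x t : ℝ) : ℝ :=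
  (Set.Icc t (t + s)).indicator
    (fun _ => x - 1 / θ + deriv (alphaFun s G) θ / alphaFun s G θ) x

open scoped ENNReal Topology

lemma mul_exp_neg_half_lt_one_sub_exp_neg {u : ℝ} (hu : 0 < u) :
    u * exp (-(u / 2)) < 1 - exp (-u) := by
  have hsinh : u / 2 < sinh (u / 2) := self_lt_sinh_iff.2 (half_pos hu)
  have hfactor : 1 - exp (-u) = exp (-(u / 2)) * (2 * sinh (u / 2)) := by
    rw [sinh_eq, mul_div_cancel₀ _ two_ne_zero, mul_sub, ← exp_add, ← exp_add]
    ring_nf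
    rw [exp_zero]
    ring
  rw [hfactor, mul_comm]
  exact mul_lt_mul_of_pos_left (by linarith) (exp_pos _)

lemma one_sub_exp_neg_mul_pos {a θ : ℝ} (ha : 0 < a) (hθ : 0 < θ) :
    0 < 1 - exp (-(θ * a)) :=
  sub_pos.2 (exp_lt_one_iff.2 (neg_lt_zero.2 (mul_pos hθ ha)))

lemma hasDerivAt_exp_neg_mul (a θ : ℝ) :
    HasDerivAt (fun θ => exp (-(θ * a))) (-(a * exp (-(θ * a)))) θ :=
  ((hasDerivAt_mul_const a).neg.exp).congr_deriv (by simp only [Pi.neg_apply]; ring)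

-- The mean of `Exp(θ)` conditioned on `[0, a]`.
noncomputable def truncExpMean (a θ : ℝ) : ℝ :=
  1 / θ - a * exp (-(θ * a)) / (1 - exp (-(θ * a)))

lemma hasDerivAt_truncExpMean {a θ : ℝ} (ha : 0 < a) (hθ : 0 < θ) :
    HasDerivAt (truncExpMean a)
      (-(1 / θ ^ 2) + a ^ 2 * exp (-(θ * a)) / (1 - exp (-(θ * a))) ^ 2) θ := by
  have hexp := hasDerivAt_exp_neg_mul a θ
  have hden := one_sub_exp_neg_mul_pos ha hθ
  refine (((hasDerivAt_const θ 1).div (hasDerivAt_id θ) hθ.ne').sub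
    ((hexp.const_mul a).div (hexp.const_sub 1) hden.ne')).congr_deriv ?_
  simp only [id]
  field_simp
  ring

lemma truncExpMean_strictAntiOn {a : ℝ} (ha : 0 < a) : StrictAntiOn (truncExpMean a) (Ioi 0) := by
  refine strictAntiOn_of_deriv_neg (convex_Ioi 0)
    (fun θ hθ => (hasDerivAt_truncExpMean ha hθ).continuousAt.continuousWithinAt) ?_
  intro θ hθ
  rw [interior_Ioi] at hθ
  rw [(hasDerivAt_truncExpMean ha hθ).deriv, neg_add_lt_iff_lt_add, add_zero,
    div_lt_div_iff₀ (pow_pos (one_sub_exp_neg_mul_pos ha hθ) 2) (pow_pos hθ 2), one_mul]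
  have hsq : (θ * a * exp (-(θ * a / 2))) ^ 2 = a ^ 2 * exp (-(θ * a)) * θ ^ 2 := by
    rw [mul_pow, ← exp_nat_mul]
    ring_nf
  rw [← hsq]
  exact pow_lt_pow_left₀ (mul_exp_neg_half_lt_one_sub_exp_neg (mul_pos hθ ha))
    (mul_pos (mul_pos hθ ha) (exp_pos _)).le two_ne_zero

-- The mean of `X̃` given selection `T̃ ≤ X̃ ≤ T̃ + s`, under `θ` (see `integral_selectedResidual`).
noncomputable def selectedMean (s G θ : ℝ) : ℝ :=
  truncExpMean s θ + truncExpMean G θ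

lemma selectedMean_strictAntiOn {s G : ℝ} (hs : 0 < s) (hG : 0 < G) :
    StrictAntiOn (selectedMean s G) (Ioi 0) := fun _ ha _ hb hab =>
  add_lt_add (truncExpMean_strictAntiOn hs ha hb hab) (truncExpMean_strictAntiOn hG ha hb hab)

lemma alphaFun_pos {s G θ : ℝ} (hs : 0 < s) (hG : 0 < G) (hθ : 0 < θ) :
    0 < alphaFun s G θ :=
  div_pos (mul_pos (one_sub_exp_neg_mul_pos hs hθ) (one_sub_exp_neg_mul_pos hθ hG)) (mul_pos hG hθ)

lemma hasDerivAt_alphaFun {s G θ : ℝ} (hs : 0 < s) (hG : 0 < G) (hθ : 0 < θ) :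
    HasDerivAt (alphaFun s G) (alphaFun s G θ * (1 / θ - selectedMean s G θ)) θ := by
  have hα : alphaFun s G = fun θ => (1 - exp (-(θ * s))) * (1 - exp (-(θ * G))) / (G * θ) := by
    funext θ
    rw [alphaFun, mul_comm G θ]
  have h1 := (one_sub_exp_neg_mul_pos hs hθ).ne'
  have h2 := (one_sub_exp_neg_mul_pos hG hθ).ne'
  rw [hα]
  refine ((((hasDerivAt_exp_neg_mul s θ).const_sub 1).mul
    ((hasDerivAt_exp_neg_mul G θ).const_sub 1)).div ((hasDerivAt_id θ).const_mul G)
    (mul_pos hG hθ).ne').congr_deriv ?_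
  simp only [selectedMean, truncExpMean, id, Pi.mul_apply]
  generalize exp (-(θ * s)) = u at h1 ⊢
  generalize exp (-(θ * G)) = v at h2 ⊢
  field_simp
  ring

noncomputable def selectedResidual (s c : ℝ) (p : ℝ × ℝ) : ℝ :=
  (Icc p.2 (p.2 + s)).indicator (fun x => x - c) p.1

lemma measurable_selectedResidual (s c : ℝ) : Measurable (selectedResidual s c) := by
  have hsel : MeasurableSet {p : ℝ × ℝ | p.1 ∈ Icc p.2 (p.2 + s)} :=
    (measurableSet_le measurable_snd measurable_fst).inter
      (measurableSet_le measurable_fst (measurable_snd.add_const s))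
  show Measurable fun p : ℝ × ℝ => (Icc p.2 (p.2 + s)).indicator (fun x => x - c) p.1
  simp only [indicator_apply]
  exact Measurable.ite hsel (measurable_fst.sub_const c) measurable_const

lemma selectedResidual_antitone (s : ℝ) (p : ℝ × ℝ) :
    Antitone fun c => selectedResidual s c p := by
  intro c c' hcc'
  simp only [selectedResidual, indicator_apply]
  split_ifs <;> linarith

lemma psiFun_eq_selectedResidual {s G θ : ℝ} (hs : 0 < s) (hG : 0 < G) (hθ : 0 < θ) (x t : ℝ) :
    psiFun s G θ x t = selectedResidual s (selectedMean s G θ) (x, t) := by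
  rw [psiFun, selectedResidual, (hasDerivAt_alphaFun hs hG hθ).deriv,
    mul_div_cancel_left₀ _ (alphaFun_pos hs hG hθ).ne']
  simp only [indicator_apply]
  split_ifs <;> ring

lemma psiFun_monotoneOn {s G : ℝ} (hs : 0 < s) (hG : 0 < G) (x t : ℝ) :
    MonotoneOn (fun θ => psiFun s G θ x t) (Ioi 0) := by
  intro θ hθ θ' hθ' hle
  simp only [psiFun_eq_selectedResidual hs hG hθ, psiFun_eq_selectedResidual hs hG hθ']
  exact selectedResidual_antitone s (x, t) ((selectedMean_strictAntiOn hs hG).antitoneOn hθ hθ' hle)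

lemma isProbabilityMeasure_uniformMeasure {G : ℝ} (hG : 0 < G) :
    IsProbabilityMeasure (uniformMeasure G) := by
  constructor
  rw [uniformMeasure, Measure.smul_apply, Measure.restrict_apply MeasurableSet.univ, univ_inter,
    Real.volume_Icc, sub_zero, smul_eq_mul, ENNReal.inv_mul_cancel (by simpa using hG)
    ENNReal.ofReal_ne_top]

lemma ae_mem_Icc_uniformMeasure (G : ℝ) : ∀ᵐ t ∂uniformMeasure G, t ∈ Icc 0 G :=
  Measure.ae_smul_measure (ae_restrict_mem measurableSet_Icc) _

lemma integral_uniformMeasure {G : ℝ} (hG : 0 < G) (g : ℝ → ℝ) :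
    ∫ t, g t ∂uniformMeasure G = G⁻¹ * ∫ t in 0..G, g t := by
  rw [uniformMeasure, integral_smul_measure, ENNReal.toReal_inv, ENNReal.toReal_ofReal hG.le,
    smul_eq_mul, intervalIntegral.integral_of_le hG.le, integral_Icc_eq_integral_Ioc]

lemma integrable_selectedResidual {s G : ℝ} (hG : 0 < G) (μ : Measure ℝ) [IsFiniteMeasure μ]
    (c : ℝ) : Integrable (selectedResidual s c) (μ.prod (uniformMeasure G)) := by
  have := isProbabilityMeasure_uniformMeasure hG
  refine Integrable.mono' (integrable_const (G + |s| + |c|))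
    (measurable_selectedResidual s c).aestronglyMeasurable ?_
  filter_upwards [Measure.quasiMeasurePreserving_snd.ae (ae_mem_Icc_uniformMeasure G)] with p hp
  simp only [selectedResidual, indicator_apply]
  split_ifs with hsel
  · calc ‖p.1 - c‖ ≤ ‖p.1‖ + ‖c‖ := norm_sub_le _ _
      _ ≤ G + |s| + |c| := by
        rw [Real.norm_of_nonneg (hp.1.trans hsel.1), Real.norm_eq_abs]
        linarith [hp.2, hsel.2, le_abs_self s]
  · rw [norm_zero]
    linarith [abs_nonneg s, abs_nonneg c]

lemma integral_expMeasure {θ : ℝ} (hθ : 0 < θ) (g : ℝ → ℝ) :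
    ∫ x, g x ∂expMeasure θ = ∫ x, exponentialPDFReal θ x * g x := by
  change ∫ x, g x ∂volume.withDensity (fun x => ((exponentialPDFReal θ x).toNNReal : ℝ≥0∞)) = _
  rw [integral_withDensity_eq_integral_smul (measurable_exponentialPDFReal θ).real_toNNReal]
  simp only [NNReal.smul_def, smul_eq_mul, Real.coe_toNNReal _ (exponentialPDFReal_nonneg hθ _)]

lemma integral_add_mul_exp_neg_mul {θ : ℝ} (hθ : θ ≠ 0) (k a b : ℝ) :
    ∫ t in a..b, (t + k) * exp (-(θ * t)) =
      (a + k + 1 / θ) * exp (-(θ * a)) / θ - (b + k + 1 / θ) * exp (-(θ * b)) / θ := by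
  have hderiv (x : ℝ) : HasDerivAt (fun t => -((t + k + 1 / θ) * exp (-(θ * t)) / θ))
      ((x + k) * exp (-(θ * x))) x := by
    refine ((((hasDerivAt_id x).add_const k).add_const (1 / θ)).mul
      ((hasDerivAt_id x).const_mul θ).neg.exp).div_const θ |>.neg |>.congr_deriv ?_
    simp only [id, Pi.neg_apply]
    field_simp
    ring
  rw [intervalIntegral.integral_eq_sub_of_hasDerivAt (fun x _ => hderiv x)
    (by apply Continuous.intervalIntegrable; fun_prop)]
  ring

lemma integral_selectedResidual_expMeasure {θ s : ℝ} (hθ : 0 < θ) (hs : 0 ≤ s) (c : ℝ)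
    {t : ℝ} (ht : 0 ≤ t) :
    ∫ x, selectedResidual s c (x, t) ∂expMeasure θ =
      (t - c + 1 / θ) * exp (-(θ * t)) - (t + s - c + 1 / θ) * exp (-(θ * (t + s))) := by
  have hdensity : (fun x => exponentialPDFReal θ x * selectedResidual s c (x, t)) =
      (Icc t (t + s)).indicator (fun x => θ * ((x + -c) * exp (-(θ * x)))) := by
    funext x
    simp only [selectedResidual, indicator_apply]
    split_ifs with hx
    · simp only [exponentialPDFReal, gammaPDFReal, if_pos (ht.trans hx.1), rpow_one, Gamma_one,
        div_one, sub_self, rpow_zero, mul_one]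
      ring
    · rw [mul_zero]
  rw [integral_expMeasure hθ, hdensity, integral_indicator measurableSet_Icc,
    integral_Icc_eq_integral_Ioc, ← intervalIntegral.integral_of_le (by linarith),
    intervalIntegral.integral_const_mul, integral_add_mul_exp_neg_mul hθ.ne']
  field_simp
  ring

theorem integral_selectedResidual {θ s G : ℝ} (hθ : 0 < θ) (hs : 0 < s) (hG : 0 < G) (c : ℝ) :
    ∫ p, selectedResidual s c p ∂(expMeasure θ).prod (uniformMeasure G) =
      alphaFun s G θ * (selectedMean s G θ - c) := by
  have := isProbabilityMeasure_expMeasure hθ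
  have := isProbabilityMeasure_uniformMeasure hG
  have hinner : EqOn (fun t => ∫ x, selectedResidual s c (x, t) ∂expMeasure θ)
      (fun t => (t + (1 / θ - c)) * exp (-(θ * t)) -
        exp (-(θ * s)) * ((t + (1 / θ - c + s)) * exp (-(θ * t)))) (uIcc 0 G) := by
    intro t ht
    rw [uIcc_of_le hG.le] at ht
    dsimp only
    rw [integral_selectedResidual_expMeasure hθ hs.le c ht.1, mul_add, neg_add, exp_add]
    ring
  rw [integral_prod_symm _ (integrable_selectedResidual hG _ c), integral_uniformMeasure hG,
    intervalIntegral.integral_congr hinner, intervalIntegral.integral_sub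
      (Continuous.intervalIntegrable (by fun_prop) _ _)
      (Continuous.intervalIntegrable (by fun_prop) _ _),
    intervalIntegral.integral_const_mul, integral_add_mul_exp_neg_mul hθ.ne',
    integral_add_mul_exp_neg_mul hθ.ne', mul_zero, neg_zero, exp_zero]
  have h1 := (one_sub_exp_neg_mul_pos hs hθ).ne'
  have h2 := (one_sub_exp_neg_mul_pos hG hθ).ne'
  simp only [alphaFun, selectedMean, truncExpMean, mul_comm G θ]
  generalize exp (-(θ * s)) = u at h1 ⊢
  generalize exp (-(θ * G)) = v at h2 ⊢
  field_simp
  ring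

lemma tendstoInMeasure_average_comp {Ω E : Type*} [MeasurableSpace Ω] [MeasurableSpace E]
    {P : Measure Ω} [IsFiniteMeasure P] {μ : Measure E} {Z : ℕ → Ω → E}
    (hZ : ∀ j, Measurable (Z j)) (hlaw : ∀ j, P.map (Z j) = μ) (hindep : iIndepFun Z P)
    {f : E → ℝ} (hf : Measurable f) (hfi : Integrable f μ) :
    TendstoInMeasure P (fun (n : ℕ) ω => (1 / (n : ℝ)) * ∑ j ∈ Finset.range n, f (Z j ω))
      atTop (fun _ => ∫ z, f z ∂μ) := by
  have hint : Integrable (f ∘ Z 0) P := by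
    rw [← hlaw 0] at hfi
    exact hfi.comp_measurable (hZ 0)
  have hident (j : ℕ) : IdentDistrib (f ∘ Z j) (f ∘ Z 0) P P :=
    IdentDistrib.comp ⟨(hZ j).aemeasurable, (hZ 0).aemeasurable, by rw [hlaw j, hlaw 0]⟩ hf
  have hmean : ∫ ω, (f ∘ Z 0) ω ∂P = ∫ z, f z ∂μ := by
    rw [← hlaw 0, integral_map (hZ 0).aemeasurable hf.aestronglyMeasurable]
    rfl
  refine tendstoInMeasure_of_tendsto_ae (fun n => Measurable.aestronglyMeasurable ?_) ?_
  · exact (Finset.measurable_sum _ fun j _ => hf.comp (hZ j)).const_mul _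
  filter_upwards [strong_law_ae_real (fun j => f ∘ Z j) hint
    (fun i j hij => (hindep.indepFun hij).comp hf hf) hident] with ω hω
  rw [hmean] at hω
  simpa only [one_div, inv_mul_eq_div, Function.comp_apply] using hω

theorem tendstoInMeasure_of_monotoneOn_score {Ω : Type*} [MeasurableSpace Ω] {P : Measure Ω}
    {S : Set ℝ} {θ₀ : ℝ} (hS : S ∈ 𝓝 θ₀) {Ψ : ℕ → ℝ → Ω → ℝ} {ψ : ℝ → ℝ}
    (hmono : ∀ n ω, MonotoneOn (fun θ => Ψ n θ ω) S)
    (hlim : ∀ θ ∈ S, TendstoInMeasure P (fun n => Ψ n θ) atTop (fun _ => ψ θ))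
    (hneg : ∀ θ ∈ S, θ < θ₀ → ψ θ < 0) (hpos : ∀ θ ∈ S, θ₀ < θ → 0 < ψ θ)
    {θhat : ℕ → Ω → ℝ} (hrange : ∀ n ω, θhat n ω ∈ S)
    (hscore : TendstoInMeasure P (fun n ω => Ψ n (θhat n ω) ω) atTop (fun _ => 0)) :
    TendstoInMeasure P θhat atTop (fun _ => θ₀) := by
  rw [tendstoInMeasure_iff_dist] at hscore ⊢
  intro η hη
  obtain ⟨r, hr, hball⟩ := Metric.mem_nhds_iff.1 hS
  obtain ⟨d, hd, hdη, hdr⟩ : ∃ d > 0, d ≤ η ∧ d < r :=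
    ⟨min η r / 2, by positivity, by linarith [min_le_left η r], by linarith [min_le_right η r]⟩
  have hlo : θ₀ - d ∈ S := hball <| by
    rw [Metric.mem_ball, Real.dist_eq, abs_lt]; constructor <;> linarith
  have hhi : θ₀ + d ∈ S := hball <| by
    rw [Metric.mem_ball, Real.dist_eq, abs_lt]; constructor <;> linarith
  obtain ⟨δ, hδ, hδhi, hδlo⟩ : ∃ δ > 0, 2 * δ ≤ ψ (θ₀ + d) ∧ 2 * δ ≤ -ψ (θ₀ - d) := by
    have hψhi := hpos _ hhi (by linarith)
    have hψlo := hneg _ hlo (by linarith)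
    exact ⟨min (ψ (θ₀ + d)) (-ψ (θ₀ - d)) / 2, half_pos (lt_min hψhi (neg_pos.2 hψlo)),
      by linarith [min_le_left (ψ (θ₀ + d)) (-ψ (θ₀ - d))],
      by linarith [min_le_right (ψ (θ₀ + d)) (-ψ (θ₀ - d))]⟩
  -- off these three events, monotonicity of `Ψ n` traps `θhat n` between `θ₀ - d` and `θ₀ + d`
  have hsub (n : ℕ) : {ω | η ≤ dist (θhat n ω) θ₀} ⊆
      {ω | δ ≤ dist (Ψ n (θhat n ω) ω) 0} ∪ {ω | δ ≤ dist (Ψ n (θ₀ + d) ω) (ψ (θ₀ + d))} ∪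
        {ω | δ ≤ dist (Ψ n (θ₀ - d) ω) (ψ (θ₀ - d))} := by
    intro ω hω
    by_contra hout
    simp only [mem_union, mem_ofPred_eq, not_or, not_le, Real.dist_eq, sub_zero] at hω hout
    obtain ⟨⟨hscoreω, hhiω⟩, hloω⟩ := hout
    rw [abs_lt] at hscoreω hhiω hloω
    rcases le_abs'.1 hω with hbelow | habove
    · have := hmono n ω (hrange n ω) hlo (by linarith)
      linarith
    · have := hmono n ω hhi (hrange n ω) (by linarith)
      linarith
  have hlim_dist (θ : ℝ) (hθ : θ ∈ S) := tendstoInMeasure_iff_dist.1 (hlim θ hθ) δ hδ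
  refine tendsto_of_tendsto_of_tendsto_of_le_of_le tendsto_const_nhds
    (by simpa using ((hscore δ hδ).add (hlim_dist _ hhi)).add (hlim_dist _ hlo)) (fun _ => zero_le)
    fun n => (measure_mono (hsub n)).trans ((measure_union_le _ _).trans
      (add_le_add_left (measure_union_le _ _) _))

theorem mle_consistency_general
    {Ω : Type*} [MeasurableSpace Ω] (P : Measure Ω) [IsProbabilityMeasure P]
    (ε s G θ₀ : ℝ) (hε0 : 0 < ε) (hs : 0 < s) (hG : 0 < G)
    (hθ₀ : θ₀ ∈ Set.Ioo ε (1 / ε))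
    (X T : ℕ → Ω → ℝ) (hXmeas : ∀ j, Measurable (X j)) (hTmeas : ∀ j, Measurable (T j))
    (hlaw : ∀ j, P.map (fun ω => (X j ω, T j ω)) = (expMeasure θ₀).prod (uniformMeasure G))
    (hindep : iIndepFun (fun j ω => (X j ω, T j ω)) P)
    (thetaHat : ℕ → Ω → ℝ)
    (hrange : ∀ n ω, thetaHat n ω ∈ Set.Icc ε (1 / ε))
    (hscore : TendstoInMeasure P
      (fun (n : ℕ) ω => (1 / (n : ℝ)) * ∑ j ∈ Finset.range n,
        psiFun s G (thetaHat n ω) (X j ω) (T j ω))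
      atTop (fun _ => 0)) :
    TendstoInMeasure P (fun n ω => thetaHat n ω) atTop (fun _ => θ₀) := by
  have hθ₀pos : 0 < θ₀ := hε0.trans hθ₀.1
  have := isProbabilityMeasure_expMeasure hθ₀pos
  refine tendstoInMeasure_of_monotoneOn_score (Ioi_mem_nhds hθ₀pos)
    (Ψ := fun n θ ω => (1 / (n : ℝ)) * ∑ j ∈ Finset.range n, psiFun s G θ (X j ω) (T j ω))
    (ψ := fun θ => alphaFun s G θ₀ * (selectedMean s G θ₀ - selectedMean s G θ))
    ?mono ?lim ?neg ?pos (fun n ω => hε0.trans_le (hrange n ω).1) hscore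
  case mono =>
    intro n ω θ hθ θ' hθ' hle
    exact mul_le_mul_of_nonneg_left (Finset.sum_le_sum fun j _ =>
      psiFun_monotoneOn hs hG _ _ hθ hθ' hle) (by positivity)
  case lim =>
    intro θ hθ
    have h := tendstoInMeasure_average_comp (fun j => (hXmeas j).prodMk (hTmeas j)) hlaw hindep
      (measurable_selectedResidual s (selectedMean s G θ))
      (integrable_selectedResidual hG _ (selectedMean s G θ))
    rw [integral_selectedResidual hθ₀pos hs hG] at h
    simpa only [psiFun_eq_selectedResidual hs hG hθ] using h
  case neg =>
    intro θ hθ hlt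
    exact mul_neg_of_pos_of_neg (alphaFun_pos hs hG hθ₀pos)
      (sub_neg.2 (selectedMean_strictAntiOn hs hG hθ hθ₀pos hlt))
  case pos =>
    intro θ hθ hlt
    exact mul_pos (alphaFun_pos hs hG hθ₀pos)
      (sub_pos.2 (selectedMean_strictAntiOn hs hG hθ₀pos hθ hlt))

/-- Consistency of the MLE in the truncated Exponential model: any `[ε, 1/ε]`-valued
estimator sequence that asymptotically solves the score equation `Ψ_n(θ̂_n) ≈ 0`
converges in probability to `θ₀`. -/
theorem mle_consistency
    {Ω : Type*} [MeasurableSpace Ω] (P : Measure Ω) [IsProbabilityMeasure P]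
    (ε s G θ₀ : ℝ) (hε0 : 0 < ε) (hε1 : ε < 1) (hs : 0 < s) (hG : 0 < G)
    (hθ₀ : θ₀ ∈ Set.Ioo ε (1 / ε))
    (X T : ℕ → Ω → ℝ) (hXmeas : ∀ j, Measurable (X j)) (hTmeas : ∀ j, Measurable (T j))
    (hlaw : ∀ j, P.map (fun ω => (X j ω, T j ω)) = (expMeasure θ₀).prod (uniformMeasure G))
    (hindep : iIndepFun (fun j ω => (X j ω, T j ω)) P)
    (thetaHat : ℕ → Ω → ℝ) (hthetaMeas : ∀ n, Measurable (thetaHat n))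
    (hrange : ∀ n ω, thetaHat n ω ∈ Set.Icc ε (1 / ε))
    (hscore : TendstoInMeasure P
      (fun (n : ℕ) ω => (1 / (n : ℝ)) * ∑ j ∈ Finset.range n,
        psiFun s G (thetaHat n ω) (X j ω) (T j ω))
      atTop (fun _ => 0)) :
    TendstoInMeasure P (fun n ω => thetaHat n ω) atTop (fun _ => θ₀) :=
  mle_consistency_general P ε s G θ₀ hε0 hs hG hθ₀ X T hXmeas hTmeas hlaw hindep thetaHat hrange
    hscore
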